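/- Let A⁺, A⁻ : ℝ → ℝ be continuous and u⁺, u⁻, û ∈ ℝ. Assume that for every convex function S of class C²(ℝ) one has A⁺(u⁺)·S′(u⁺) − ∫_{û}^{u⁺} A⁺(v)·S″(v) dv ≤ A⁻(u⁻)·S′(u⁻) − ∫_{û}^{u⁻} A⁻(v)·S″(v) dv. Then for every c ∈ ℝ with c ∉ {u⁺, u⁻, û}, the Kruzkov entropy inequality holds at c. -/

import Mathlib

open MeasureTheory Filter Set

/-- The Kruzkov entropy inequality at `c` for data `(um, up, uh)`:
`A⁺(u⁺)·sign(u⁺−c) − 2·sign(u⁺−û)·A⁺(c)·𝟙_{(û,u⁺)}(c) ≤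
 A⁻(u⁻)·sign(u⁻−c) − 2·sign(u⁻−û)·A⁻(c)·𝟙_{(û,u⁻)}(c)`. -/
def KruzkovIneq (Ap Am : ℝ → ℝ) (um up uh c : ℝ) : Prop :=
  Ap up * Real.sign (up - c) -
      2 * Real.sign (up - uh) * Ap c * Set.indicator (Set.uIoo uh up) (1 : ℝ → ℝ) c
    ≤ Am um * Real.sign (um - c) -
      2 * Real.sign (um - uh) * Am c * Set.indicator (Set.uIoo uh um) (1 : ℝ → ℝ) c

/-!
Test the hypothesis with `S_ε = kruzkovApprox c ε`, the primitive of `smoothSign ((· - c) / ε)`;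
these are convex smoothings of `|· - c|`, since `smoothSign` is a smooth monotone step from `-1`
on `(-∞, -1]` to `1` on `[1, ∞)`. For `u ≠ c` and small `ε` one has `S_ε' u = sign (u - c)`, and
the substitution `v = c + ε t` turns `∫_{û}^{u} A S_ε''` into
`∫_{(û - c)/ε}^{(u - c)/ε} A (c + ε t) smoothSign' t dt`; as `smoothSign'` vanishes off `(-1, 1)`,
the endpoints may be replaced by `sign (û - c)` and `sign (u - c)`. The result is continuous in
`ε`, and at `ε = 0` it equals `A c (sign (u - c) - sign (û - c))`, which is the indicator term of
the Kruzkov inequality. Now let `ε → 0⁺` on both sides.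
-/

open Real Topology

noncomputable def smoothSign (t : ℝ) : ℝ := 2 * smoothTransition ((t + 1) / 2) - 1

lemma contDiff_smoothSign {n : ℕ∞} : ContDiff ℝ n smoothSign :=
  (contDiff_const.mul (smoothTransition.contDiff.comp
    ((contDiff_id.add contDiff_const).div_const _))).sub contDiff_const

@[fun_prop]
lemma continuous_deriv_smoothSign : Continuous (deriv smoothSign) :=
  (contDiff_smoothSign (n := 1)).continuous_deriv le_rfl

lemma monotone_smoothSign : Monotone smoothSign := fun s t hst => by
  have := smoothTransition.monotone (show (s + 1) / 2 ≤ (t + 1) / 2 by linarith)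
  unfold smoothSign
  linarith

lemma smoothSign_mem_Icc (t : ℝ) : smoothSign t ∈ Icc (-1) 1 := by
  have h₀ := smoothTransition.nonneg ((t + 1) / 2)
  have h₁ := smoothTransition.le_one ((t + 1) / 2)
  constructor <;> unfold smoothSign <;> linarith

lemma smoothSign_of_le_neg_one {t : ℝ} (ht : t ≤ -1) : smoothSign t = -1 := by
  rw [smoothSign, smoothTransition.zero_of_nonpos (by linarith)]
  norm_num

lemma smoothSign_of_one_le {t : ℝ} (ht : 1 ≤ t) : smoothSign t = 1 := by
  rw [smoothSign, smoothTransition.one_of_one_le (by linarith)]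
  norm_num

lemma smoothSign_sign {y : ℝ} (hy : y ≠ 0) : smoothSign (sign y) = sign y := by
  rcases hy.lt_or_gt with hy | hy
  · rw [sign_of_neg hy, smoothSign_of_le_neg_one le_rfl]
  · rw [sign_of_pos hy, smoothSign_of_one_le le_rfl]

-- Where `smoothSign` attains `±1` it is extremal, so its derivative vanishes.
lemma deriv_smoothSign_of_one_le_abs {t : ℝ} (ht : 1 ≤ |t|) : deriv smoothSign t = 0 := by
  rcases le_abs'.mp ht with ht | ht
  · refine IsLocalMin.deriv_eq_zero (Eventually.of_forall fun s => ?_)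
    rw [smoothSign_of_le_neg_one ht]
    exact (smoothSign_mem_Icc s).1
  · refine IsLocalMax.deriv_eq_zero (Eventually.of_forall fun s => ?_)
    rw [smoothSign_of_one_le ht]
    exact (smoothSign_mem_Icc s).2

lemma smoothSign_div_of_le_abs {y ε : ℝ} (hε : 0 < ε) (hy : ε ≤ |y|) :
    smoothSign (y / ε) = sign y := by
  rcases (abs_pos.1 (hε.trans_le hy)).lt_or_gt with hy' | hy'
  · rw [abs_of_neg hy'] at hy
    rw [sign_of_neg hy', smoothSign_of_le_neg_one ((div_le_iff₀ hε).2 (by linarith))]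
  · rw [abs_of_pos hy'] at hy
    rw [sign_of_pos hy', smoothSign_of_one_le ((one_le_div hε).2 hy)]

lemma deriv_smoothSign_eqOn_uIcc_sign_div {y ε : ℝ} (hε : 0 < ε) (hy : ε ≤ |y|) :
    EqOn (deriv smoothSign) 0 (uIcc (y / ε) (sign y)) := by
  intro t ht
  refine deriv_smoothSign_of_one_le_abs ?_
  rcases (abs_pos.1 (hε.trans_le hy)).lt_or_gt with hy' | hy'
  · rw [abs_of_neg hy'] at hy
    have : y / ε ≤ -1 := (div_le_iff₀ hε).2 (by linarith)
    rw [sign_of_neg hy', uIcc_comm, mem_uIcc] at ht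
    rcases ht with ht | ht <;> linarith [neg_le_abs t]
  · rw [abs_of_pos hy'] at hy
    have : 1 ≤ y / ε := (one_le_div hε).2 hy
    rw [sign_of_pos hy', uIcc_comm, mem_uIcc] at ht
    rcases ht with ht | ht <;> linarith [le_abs_self t]

lemma integral_eq_integral_of_eqOn_zero {f : ℝ → ℝ} (hf : Continuous f) {a a' b b' : ℝ}
    (ha : EqOn f 0 (uIcc a a')) (hb : EqOn f 0 (uIcc b b')) :
    ∫ t in a..b, f t = ∫ t in a'..b', f t := by
  have hzero {x y : ℝ} (h : EqOn f 0 (uIcc x y)) : ∫ t in x..y, f t = 0 := by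
    simp [intervalIntegral.integral_congr h]
  rw [← sub_eq_zero, intervalIntegral.integral_interval_sub_interval_comm
    (hf.intervalIntegrable _ _) (hf.intervalIntegrable _ _) (hf.intervalIntegrable _ _),
    hzero ha, hzero hb, sub_zero]

lemma sign_sub_sub_sign_sub {u w c : ℝ} (hu : u ≠ c) (hw : w ≠ c) :
    sign (u - c) - sign (w - c) = 2 * sign (u - w) * indicator (uIoo w u) 1 c := by
  rcases hu.lt_or_gt with hu | hu <;> rcases hw.lt_or_gt with hw | hw
  · rw [indicator_of_notMem fun h => notMem_uIcc_of_gt hw hu (uIoo_subset_uIcc_self h),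
      sign_of_neg (sub_neg.2 hu), sign_of_neg (sub_neg.2 hw)]
    ring
  · rw [indicator_of_mem (mem_uIoo_of_gt hu hw), sign_of_neg (sub_neg.2 hu),
      sign_of_pos (sub_pos.2 hw), sign_of_neg (sub_neg.2 (hu.trans hw))]
    norm_num
  · rw [indicator_of_mem (mem_uIoo_of_lt hw hu), sign_of_pos (sub_pos.2 hu),
      sign_of_neg (sub_neg.2 hw), sign_of_pos (sub_pos.2 (hw.trans hu))]
    norm_num
  · rw [indicator_of_notMem fun h => notMem_uIcc_of_lt hw hu (uIoo_subset_uIcc_self h),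
      sign_of_pos (sub_pos.2 hu), sign_of_pos (sub_pos.2 hw)]
    ring

noncomputable def kruzkovApprox (c ε x : ℝ) : ℝ := ∫ y in (0 : ℝ)..x, smoothSign ((y - c) / ε)

section kruzkovApprox

variable {c ε : ℝ}

lemma continuous_smoothSign_sub_div : Continuous fun y => smoothSign ((y - c) / ε) :=
  (contDiff_smoothSign (n := 0)).continuous.comp ((continuous_id.sub continuous_const).div_const ε)

lemma hasDerivAt_smoothSign_sub_div (x : ℝ) :
    HasDerivAt (fun y => smoothSign ((y - c) / ε)) (deriv smoothSign ((x - c) / ε) / ε) x := by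
  have := (contDiff_smoothSign (n := 1)).differentiable one_ne_zero ((x - c) / ε)
  have h := this.hasDerivAt.comp x (((hasDerivAt_id x).sub_const c).div_const ε)
  rwa [one_div, ← div_eq_mul_inv] at h

lemma hasDerivAt_kruzkovApprox (x : ℝ) :
    HasDerivAt (kruzkovApprox c ε) (smoothSign ((x - c) / ε)) x :=
  (continuous_smoothSign_sub_div.integral_hasStrictDerivAt 0 x).hasDerivAt

lemma deriv_kruzkovApprox : deriv (kruzkovApprox c ε) = fun x => smoothSign ((x - c) / ε) :=
  funext fun x => (hasDerivAt_kruzkovApprox x).deriv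

lemma deriv_deriv_kruzkovApprox :
    deriv (deriv (kruzkovApprox c ε)) = fun x => deriv smoothSign ((x - c) / ε) / ε := by
  rw [deriv_kruzkovApprox]
  exact funext fun x => (hasDerivAt_smoothSign_sub_div x).deriv

lemma contDiff_kruzkovApprox : ContDiff ℝ 2 (kruzkovApprox c ε) := by
  rw [show (2 : WithTop ℕ∞) = 1 + 1 from rfl, contDiff_succ_iff_deriv, deriv_kruzkovApprox]
  refine ⟨fun x => (hasDerivAt_kruzkovApprox x).differentiableAt, by simp, ?_⟩
  exact contDiff_smoothSign.comp ((contDiff_id.sub contDiff_const).div_const ε)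

lemma convexOn_kruzkovApprox (hε : 0 < ε) : ConvexOn ℝ univ (kruzkovApprox c ε) := by
  refine Monotone.convexOn_univ_of_deriv (fun x => (hasDerivAt_kruzkovApprox x).differentiableAt) ?_
  rw [deriv_kruzkovApprox]
  exact monotone_smoothSign.comp fun x y hxy => by gcongr

end kruzkovApprox

lemma integral_mul_deriv_deriv_kruzkovApprox (A : ℝ → ℝ) {ε : ℝ} (hε : ε ≠ 0) (c w u : ℝ) :
    ∫ v in w..u, A v * deriv (deriv (kruzkovApprox c ε)) v =
      ∫ t in (w - c) / ε..(u - c) / ε, A (c + ε * t) * deriv smoothSign t := by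
  set g : ℝ → ℝ := fun v => A v * deriv smoothSign ((v - c) / ε)
  have hend (x : ℝ) : c + ε * ((x - c) / ε) = x := by field_simp; ring
  calc ∫ v in w..u, A v * deriv (deriv (kruzkovApprox c ε)) v
      = ε⁻¹ • ∫ v in w..u, g v := by
        rw [deriv_deriv_kruzkovApprox, smul_eq_mul, ← intervalIntegral.integral_const_mul]
        congr 1 with v
        ring
    _ = ∫ t in (w - c) / ε..(u - c) / ε, g (c + ε * t) := by
        rw [intervalIntegral.integral_comp_add_mul g hε, hend, hend]
    _ = _ := by
        congr 1 with t
        simp only [g, add_sub_cancel_left, mul_div_cancel_left₀ t hε]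

lemma tendsto_kruzkovApprox_flux {A : ℝ → ℝ} (hA : Continuous A) {u w c : ℝ} (hu : u ≠ c)
    (hw : w ≠ c) :
    Tendsto (fun ε => A u * deriv (kruzkovApprox c ε) u -
        ∫ v in w..u, A v * deriv (deriv (kruzkovApprox c ε)) v) (𝓝[>] 0)
      (𝓝 (A u * sign (u - c) - 2 * sign (u - w) * A c * indicator (uIoo w u) 1 c)) := by
  set F : ℝ → ℝ := fun ε =>
    A u * sign (u - c) - ∫ t in sign (w - c)..sign (u - c), A (c + ε * t) * deriv smoothSign t
  have hF : Continuous F := continuous_const.sub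
    (intervalIntegral.continuous_parametric_intervalIntegral_of_continuous'
      (by fun_prop) _ _)
  have hF₀ : F 0 = A u * sign (u - c) - 2 * sign (u - w) * A c * indicator (uIoo w u) 1 c := by
    have hftc : ∫ t in sign (w - c)..sign (u - c), deriv smoothSign t =
        sign (u - c) - sign (w - c) := by
      rw [intervalIntegral.integral_deriv_eq_sub
          (fun t _ => (contDiff_smoothSign (n := 1)).differentiable one_ne_zero t)
          (continuous_deriv_smoothSign.intervalIntegrable _ _),
        smoothSign_sign (sub_ne_zero.2 hu), smoothSign_sign (sub_ne_zero.2 hw)]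
    simp only [F, zero_mul, add_zero, intervalIntegral.integral_const_mul, hftc,
      sign_sub_sub_sign_sub hu hw]
    ring
  have hmin : 0 < min |u - c| |w - c| :=
    lt_min (abs_pos.2 (sub_ne_zero.2 hu)) (abs_pos.2 (sub_ne_zero.2 hw))
  rw [← hF₀]
  refine ((hF.tendsto 0).mono_left nhdsWithin_le_nhds).congr' ?_
  filter_upwards [Ioo_mem_nhdsGT hmin] with ε ⟨hε, hεuw⟩
  have hεu : ε ≤ |u - c| := (hεuw.trans_le (min_le_left _ _)).le
  have hεw : ε ≤ |w - c| := (hεuw.trans_le (min_le_right _ _)).le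
  have hvanish {y : ℝ} (hy : ε ≤ |y|) :
      EqOn (fun t => A (c + ε * t) * deriv smoothSign t) 0 (uIcc (y / ε) (sign y)) :=
    fun t ht => by simp [deriv_smoothSign_eqOn_uIcc_sign_div hε hy ht]
  rw [(hasDerivAt_kruzkovApprox u).deriv, smoothSign_div_of_le_abs hε hεu,
    integral_mul_deriv_deriv_kruzkovApprox A hε.ne', integral_eq_integral_of_eqOn_zero
      (by fun_prop) (hvanish hεw) (hvanish hεu)]

theorem stmt_5 (Ap Am : ℝ → ℝ) (hAp : Continuous Ap) (hAm : Continuous Am)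
    (up um uh : ℝ)
    (hent : ∀ S : ℝ → ℝ, ContDiff ℝ 2 S → ConvexOn ℝ Set.univ S →
      Ap up * deriv S up - ∫ v in uh..up, Ap v * deriv (deriv S) v
        ≤ Am um * deriv S um - ∫ v in uh..um, Am v * deriv (deriv S) v) :
    ∀ c : ℝ, c ≠ up → c ≠ um → c ≠ uh → KruzkovIneq Ap Am um up uh c := by
  intro c hup hum huh
  refine le_of_tendsto_of_tendsto (tendsto_kruzkovApprox_flux hAp hup.symm huh.symm)
    (tendsto_kruzkovApprox_flux hAm hum.symm huh.symm) ?_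
  filter_upwards [self_mem_nhdsWithin] with ε (hε : 0 < ε)
  exact hent _ contDiff_kruzkovApprox (convexOn_kruzkovApprox hε)
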